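/- arXiv:2507.07777 — 3 statements merged into one kernel-verified Lean document; each statement's English description precedes it below -/
import Mathlib

section
/- Let a ∈ 𝒜. The following are equivalent: (1) a has a w-weighted core inverse; (2) aw has a group inverse and there exists x ∈ 𝒜 such that xw(aw)² = aw and (wawx)* = wawx; (3) aw has a group inverse g and there exists x ∈ 𝒜 such that xw(aw) = (aw)g and (wawx)* = wawx. -/
open Filter

/-- `y` is quasinilpotent: `‖yⁿ‖^{1/n} → 0`. -/
def IsQuasinilpotent {R : Type*} [NormedRing R] (y : R) : Prop :=
  Filter.Tendsto (fun n : ℕ => ‖y ^ n‖ ^ (1 / (n : ℝ))) Filter.atTop (nhds 0)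

/-- `y` is `w`-quasinilpotent: `‖(yw)ⁿ‖^{1/n} → 0`. -/
def IsWQuasinilpotent {R : Type*} [NormedRing R] (w y : R) : Prop :=
  Filter.Tendsto (fun n : ℕ => ‖(y * w) ^ n‖ ^ (1 / (n : ℝ))) Filter.atTop (nhds 0)

/-- `x` is a `w`-weighted core inverse of `a`. -/
def IsWCoreInv {R : Type*} [NormedRing R] [StarRing R] (w a x : R) : Prop :=
  a * (w * x) ^ 2 = x ∧ star (w * a * w * x) = w * a * w * x ∧ x * w * (a * w) ^ 2 = a * w

/-- `x` is a generalized `w`-weighted core-EP inverse of `a`. -/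
def IsWCoreEPInv {R : Type*} [NormedRing R] [StarRing R] (w a x : R) : Prop :=
  a * (w * x) ^ 2 = x ∧ star (w * a * w * x) = w * a * w * x ∧
    Filter.Tendsto (fun n : ℕ => ‖(a * w) ^ n - x * w * (a * w) ^ (n + 1)‖ ^ (1 / (n : ℝ)))
      Filter.atTop (nhds 0)

/-- `g` is a group inverse of `b`. -/
def IsGroupInv {R : Type*} [Ring R] (b g : R) : Prop :=
  b * g * b = b ∧ g * b * g = g ∧ b * g = g * b

/-- `u` is a (1,3)-inverse of `b`. -/
def Is13Inv {R : Type*} [Ring R] [StarRing R] (b u : R) : Prop :=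
  b * u * b = b ∧ star (b * u) = b * u

/-- `x` is a `(b,c)`-inverse of `a`. -/
def IsBCInv {R : Type*} [Ring R] (b c a x : R) : Prop :=
  x * a * b = b ∧ c * a * x = c ∧ (∃ s, x = b * s * x) ∧ (∃ t, x = x * t * c)

/-- `x` is a g-Drazin inverse of `b`. -/
def IsGDrazinInv {R : Type*} [NormedRing R] (b x : R) : Prop :=
  b * x = x * b ∧ x * b * x = x ∧ IsQuasinilpotent (b - b ^ 2 * x)

/-- `x` is a `w`-weighted g-Drazin inverse of `a`. -/
def IsWGDrazinInv {R : Type*} [NormedRing R] (w a x : R) : Prop :=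
  a * w * x = x * w * a ∧ x * w * a * w * x = x ∧
    IsWQuasinilpotent w (a - a * w * x * w * a)

/-- `x` is a core inverse of `a`. -/
def IsCoreInv {R : Type*} [Ring R] [StarRing R] (a x : R) : Prop :=
  a * x ^ 2 = x ∧ star (a * x) = a * x ∧ x * a ^ 2 = a

/-- `x` is a generalized core-EP inverse of `a`. -/
def IsCoreEPInv {R : Type*} [NormedRing R] [StarRing R] (a x : R) : Prop :=
  a * x ^ 2 = x ∧ star (a * x) = a * x ∧
    Filter.Tendsto (fun n : ℕ => ‖a ^ n - x * a ^ (n + 1)‖ ^ (1 / (n : ℝ)))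
      Filter.atTop (nhds 0)

/-- `x` is a pseudo core (core-EP) inverse of `a`. -/
def IsPseudoCoreInv {R : Type*} [Ring R] [StarRing R] (a x : R) : Prop :=
  a * x ^ 2 = x ∧ star (a * x) = a * x ∧ ∃ k : ℕ, 0 < k ∧ x * a ^ (k + 1) = a ^ k

/-- `u` is a `(1,3,w)`-inverse of `b`. -/
def Is13wInv {R : Type*} [Ring R] [StarRing R] (w b u : R) : Prop :=
  b = b * w * u * w * b ∧ star (w * b * w * u) = w * b * w * u

variable {A : Type*} [NormedRing A] [NormedAlgebra ℂ A] [StarRing A] [StarModule ℂ A]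
  [CompleteSpace A]

/-! If `x` is a `w`-weighted core inverse of `a`, then `z = xw` satisfies `(aw)z² = z` and
`z(aw)² = aw`, which makes `z²(aw)` the group inverse of `aw`. Given a group inverse `g` of `aw`,
the identity `(aw)²g = aw` lets one cancel a factor `aw` on the right, so `xw(aw)² = aw` is
equivalent to `xw(aw) = (aw)g`; from such an `x` the element `(aw)g x` is the weighted core
inverse, its hermitian product `wawx` being unchanged since `aw(aw)g = aw`. -/

section GroupInverse

variable {R : Type*} [Ring R] {b g : R}

theorem IsGroupInv.mul_mul_self_mul (hg : IsGroupInv b g) : b * (b * g) = b := by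
  rw [hg.2.2, ← mul_assoc, hg.1]

theorem IsGroupInv.mul_eq_mul_of_mul_sq_eq (hg : IsGroupInv b g) {y : R} (hy : y * b ^ 2 = b) :
    y * b = b * g := by
  calc y * b = y * (b * (b * g)) := by rw [hg.mul_mul_self_mul]
    _ = y * b ^ 2 * g := by noncomm_ring
    _ = b * g := by rw [hy]

theorem isGroupInv_sq_mul {z : R} (h₁ : b * z ^ 2 = z) (h₂ : z * b ^ 2 = b) :
    IsGroupInv b (z ^ 2 * b) := by
  have hleft : b * (z ^ 2 * b) = z * b := by rw [← mul_assoc, h₁]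
  have hright : z ^ 2 * b * b = z * b := by rw [sq, mul_assoc, mul_assoc, ← sq, h₂]
  refine ⟨?_, ?_, by rw [hleft, hright]⟩
  · rw [hleft, mul_assoc, ← sq, h₂]
  · calc z ^ 2 * b * b * (z ^ 2 * b) = z * (b * z ^ 2) * b := by rw [hright]; noncomm_ring
      _ = z ^ 2 * b := by rw [h₁, sq]

end GroupInverse

section WeightedCoreInverse

variable {R : Type*} [NormedRing R] [StarRing R] {w a x g : R}

theorem IsWCoreInv.isGroupInv (h : IsWCoreInv w a x) :
    IsGroupInv (a * w) ((x * w) ^ 2 * (a * w)) := by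
  refine isGroupInv_sq_mul ?_ h.2.2
  calc a * w * (x * w) ^ 2 = a * (w * x) ^ 2 * w := by noncomm_ring
    _ = x * w := by rw [h.1]

theorem isWCoreInv_mul_mul_of_isGroupInv (hg : IsGroupInv (a * w) g)
    (hx : x * w * (a * w) = a * w * g) (hs : star (w * a * w * x) = w * a * w * x) :
    IsWCoreInv w a (a * w * g * x) := by
  have hb := hg.mul_mul_self_mul
  refine ⟨?_, ?_, ?_⟩
  · calc a * (w * (a * w * g * x)) ^ 2
        = a * w * (a * w * g) * (x * w * (a * w)) * g * x := by noncomm_ring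
      _ = a * w * (a * w * g) * (a * w * g * g) * x := by rw [hx]; noncomm_ring
      _ = a * w * (g * (a * w) * g) * x := by rw [hb, hg.2.2]
      _ = a * w * g * x := by rw [hg.2.1]
  · have hwaw : w * a * w * (a * w * g * x) = w * a * w * x := by
      calc w * a * w * (a * w * g * x) = w * (a * w * (a * w * g)) * x := by noncomm_ring
        _ = w * a * w * x := by rw [hb, ← mul_assoc]
    rw [hwaw, hs]
  · calc a * w * g * x * w * (a * w) ^ 2 = a * w * g * (x * w * (a * w)) * (a * w) := by
          noncomm_ring
      _ = a * w * g * (a * w) * g * (a * w) := by rw [hx]; noncomm_ring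
      _ = a * w := by rw [hg.1, hg.1]

end WeightedCoreInverse

/-- Corollary 2.5. -/
theorem isWCoreInv_exists_tfae (w a : A) :
    List.TFAE
      [ ∃ x, IsWCoreInv w a x,
        (∃ g, IsGroupInv (a * w) g) ∧
          ∃ x, x * w * (a * w) ^ 2 = a * w ∧ star (w * a * w * x) = w * a * w * x,
        ∃ g, IsGroupInv (a * w) g ∧
          ∃ x, x * w * (a * w) = a * w * g ∧ star (w * a * w * x) = w * a * w * x ] := by
  tfae_have 1 → 2
  | ⟨x, hx⟩ => ⟨⟨_, hx.isGroupInv⟩, x, hx.2.2, hx.2.1⟩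
  tfae_have 2 → 3
  | ⟨⟨g, hg⟩, x, hx, hs⟩ => ⟨g, hg, x, hg.mul_eq_mul_of_mul_sq_eq hx, hs⟩
  tfae_have 3 → 1
  | ⟨g, hg, x, hx, hs⟩ => ⟨_, isWCoreInv_mul_mul_of_isGroupInv hg hx hs⟩
  tfae_finish
end

section
/- Let a ∈ 𝒜. The following are equivalent: (1) a has a pseudo core inverse; (2) there exist z, y ∈ 𝒜 such that a = z + y, z*y = 0, yz = 0, z has a core inverse, and y is nilpotent; (3) there exist z, y ∈ 𝒜 such that a = z + y, yz = 0, z has a core inverse, and y is nilpotent. In this case the pseudo core inverse of a equals z^{⊛}. -/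
open Filter

variable {A : Type*} [NormedRing A] [NormedAlgebra ℂ A] [StarRing A] [StarModule ℂ A]
  [CompleteSpace A]

/-!
If `y * z = 0` then `(z + y) ^ (m + 1) = z * (z + y) ^ m + y ^ (m + 1)`, so once `y ^ n = 0` the
powers of `a = z + y` satisfy `a ^ (n + 2) = z ^ 2 * a ^ n`; with `u * z ^ 2 = z` this gives
`u * a ^ (n + 2) = a ^ (n + 1)`, while `y * u = y * z * u ^ 2 = 0` makes `a * u = z * u`.

Conversely a pseudo core inverse `x` of `a` satisfies `x * a * x = x` and `x * a ^ 2 * x = a * x`,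
so `p = a * x` is a self-adjoint idempotent with `a * p = p * a * p`. Hence `z = p * a` has core
inverse `x`, `star z * y = 0` and `y * z = 0` for `y = a - p * a`, and
`y ^ (m + 1) = a ^ (m + 1) - p * a ^ (m + 1)`, which vanishes when `x * a ^ (m + 1) = a ^ m`.
-/

section Ring

variable {R : Type*} [Ring R]

theorem add_pow_succ_of_mul_eq_zero {z y : R} (hyz : y * z = 0) (m : ℕ) :
    (z + y) ^ (m + 1) = z * (z + y) ^ m + y ^ (m + 1) := by
  induction m with
  | zero => simp
  | succ m ih =>
    have hyz' : y ^ (m + 1) * z = 0 := by rw [pow_succ, mul_assoc, hyz, mul_zero]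
    rw [pow_succ, ih, add_mul, mul_assoc z, ← pow_succ, mul_add, hyz', zero_add, ← pow_succ, ih]

theorem sub_mul_pow_succ_of_mul_eq {a p : R} (hap : a * p = p * a * p) (m : ℕ) :
    (a - p * a) ^ (m + 1) = a ^ (m + 1) - p * a ^ (m + 1) := by
  induction m with
  | zero => simp
  | succ m ih =>
    have key : a * p * a ^ (m + 1) = p * a * p * a ^ (m + 1) := by rw [hap]
    rw [pow_succ', ih, pow_succ' a (m + 1)]
    simp only [sub_mul, mul_sub, ← mul_assoc, key]
    abel

theorem pow_mul_pow_succ_of_mul_sq_eq {a x : R} (h : a * x ^ 2 = x) (m : ℕ) :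
    a ^ m * x ^ (m + 1) = x := by
  induction m with
  | zero => simp
  | succ m ih =>
    have hax : a * x ^ (m + 1 + 1) = x ^ (m + 1) := by
      rw [add_assoc, add_comm m, pow_add, ← mul_assoc, h, ← pow_succ']
    rw [pow_succ, mul_assoc, hax, ih]

end Ring

section StarRing

variable {R : Type*} [Ring R] [StarRing R]

theorem IsCoreInv.isPseudoCoreInv_add {z y u : R} (hu : IsCoreInv z u) (hyz : y * z = 0)
    (hy : IsNilpotent y) : IsPseudoCoreInv (z + y) u := by
  obtain ⟨hzu, hsa, huz⟩ := hu
  obtain ⟨n, hn⟩ := hy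
  have hyu : y * u = 0 := by rw [← hzu, ← mul_assoc, hyz, zero_mul]
  have hau : (z + y) * u = z * u := by rw [add_mul, hyu, add_zero]
  have hpow : ∀ m, n ≤ m → (z + y) ^ (m + 1) = z * (z + y) ^ m := fun m hm => by
    rw [add_pow_succ_of_mul_eq_zero hyz, pow_eq_zero_of_le (by omega) hn, add_zero]
  refine ⟨?_, by rwa [hau], n + 1, n.succ_pos, ?_⟩
  · rw [sq, ← mul_assoc, hau, mul_assoc, ← sq, hzu]
  · rw [hpow _ (by omega), hpow n le_rfl, ← mul_assoc z z, ← sq, ← mul_assoc, huz,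
      ← hpow n le_rfl]

namespace IsPseudoCoreInv

variable {a x : R} (hx : IsPseudoCoreInv a x)
include hx

theorem mul_pow_succ_mul_self (j : ℕ) : x * a ^ (j + 1) * x = a ^ j * x := by
  obtain ⟨hax, -, k, -, hk⟩ := hx
  have hpow := pow_mul_pow_succ_of_mul_sq_eq hax k
  calc x * a ^ (j + 1) * x = x * a ^ (j + 1) * (a ^ k * x ^ (k + 1)) := by rw [hpow]
    _ = x * a ^ (k + 1) * (a ^ j * x ^ (k + 1)) := by
      rw [mul_assoc, ← mul_assoc (a ^ (j + 1)), ← pow_add, show j + 1 + k = k + 1 + j by omega,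
        pow_add a (k + 1) j]
      simp only [mul_assoc]
    _ = a ^ j * (a ^ k * x ^ (k + 1)) := by
      rw [hk, ← mul_assoc, ← mul_assoc, ← pow_add, ← pow_add, add_comm]
    _ = a ^ j * x := by rw [hpow]

theorem mul_mul_self : x * a * x = x := by
  simpa using hx.mul_pow_succ_mul_self 0

theorem mul_sq_mul : x * a ^ 2 * x = a * x := by
  simpa using hx.mul_pow_succ_mul_self 1

theorem isIdempotentElem_mul : IsIdempotentElem (a * x) := by
  calc a * x * (a * x) = a * (x * a * x) := by noncomm_ring
    _ = a * x := by rw [hx.mul_mul_self]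

theorem mul_mul_eq_mul_mul_mul_mul : a * (a * x) = a * x * a * (a * x) := by
  calc a * (a * x) = a * (x * a ^ 2 * x) := by rw [hx.mul_sq_mul]
    _ = a * x * a * (a * x) := by noncomm_ring

theorem isCoreInv_mul_mul : IsCoreInv (a * x * a) x := by
  refine ⟨?_, by rw [mul_assoc (a * x) a x, hx.isIdempotentElem_mul.eq]; exact hx.2.1, ?_⟩
  · calc a * x * a * x ^ 2 = a * (x * a * x) * x := by noncomm_ring
      _ = x := by rw [hx.mul_mul_self, mul_assoc, ← sq, hx.1]
  · calc x * (a * x * a) ^ 2 = x * a * x * (a ^ 2 * x * a) := by noncomm_ring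
      _ = x * a ^ 2 * x * a := by rw [hx.mul_mul_self]; noncomm_ring
      _ = a * x * a := by rw [hx.mul_sq_mul]

theorem isNilpotent_sub_mul_mul : IsNilpotent (a - a * x * a) := by
  have hap := hx.mul_mul_eq_mul_mul_mul_mul
  obtain ⟨-, -, k, -, hk⟩ := hx
  refine ⟨k + 1, ?_⟩
  rw [sub_mul_pow_succ_of_mul_eq hap, mul_assoc, hk, ← pow_succ', sub_self]

theorem exists_decomposition : ∃ z y : R, a = z + y ∧ star z * y = 0 ∧ y * z = 0 ∧
    (∃ u, IsCoreInv z u) ∧ IsNilpotent y := by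
  refine ⟨a * x * a, a - a * x * a, (add_sub_cancel _ _).symm, ?_, ?_,
    ⟨x, hx.isCoreInv_mul_mul⟩, hx.isNilpotent_sub_mul_mul⟩
  · calc star (a * x * a) * (a - a * x * a) = star a * star (a * x) * (a - a * x * a) := by
          rw [star_mul]
      _ = star a * (a * x * a - a * x * (a * x) * a) := by rw [hx.2.1]; noncomm_ring
      _ = 0 := by rw [hx.isIdempotentElem_mul.eq, sub_self, mul_zero]
  · calc (a - a * x * a) * (a * x * a) = (a * (a * x) - a * x * a * (a * x)) * a := by
          noncomm_ring
      _ = 0 := by rw [← hx.mul_mul_eq_mul_mul_mul_mul, sub_self, zero_mul]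

end IsPseudoCoreInv

end StarRing

/-- Corollary 3.4. -/
theorem isPseudoCoreInv_exists_tfae (a : A) :
    (List.TFAE
      [ ∃ x, IsPseudoCoreInv a x,
        ∃ z y : A, a = z + y ∧ star z * y = 0 ∧ y * z = 0 ∧
          (∃ u, IsCoreInv z u) ∧ IsNilpotent y,
        ∃ z y : A, a = z + y ∧ y * z = 0 ∧
          (∃ u, IsCoreInv z u) ∧ IsNilpotent y ]) ∧
    (∀ z y u : A, a = z + y → y * z = 0 → IsCoreInv z u →
      IsNilpotent y → IsPseudoCoreInv a u) := by
  have hsum : ∀ z y u : A, a = z + y → y * z = 0 → IsCoreInv z u →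
      IsNilpotent y → IsPseudoCoreInv a u := by
    rintro z y u rfl hyz hu hy
    exact hu.isPseudoCoreInv_add hyz hy
  refine ⟨?_, hsum⟩
  tfae_have 1 → 2 := fun ⟨_, hx⟩ => hx.exists_decomposition
  tfae_have 2 → 3 := fun ⟨z, y, ha, _, hyz, hu, hy⟩ => ⟨z, y, ha, hyz, hu, hy⟩
  tfae_have 3 → 1 := fun ⟨z, y, ha, hyz, ⟨u, hu⟩, hy⟩ => ⟨u, hsum z y u ha hyz hu hy⟩
  tfae_finish
end

section
/- Let a ∈ 𝒜 and let n be a positive integer. Then a has a generalized core-EP inverse if and only if (1) a has a g-Drazin inverse, and (2) there exists p ∈ 𝒜 with p² = p = p* such that pa = pap, pa is quasinilpotent, and aⁿ + p is invertible in 𝒜. -/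
open Filter

/-!
Write `e = a x` and `p = 1 - e`. The conditions on `p` say that `a` is upper triangular for the
decomposition `1 = e + p` (`p a e = 0`), with quasinilpotent lower corner `p a p = p a`; the
core-EP inverse is exactly the inverse of the upper corner `e a e` in the ring `e A e`. The limit
condition on `x` is what makes `a` triangular: `(1 - x a) a x = (aᵏ - x aᵏ⁺¹) xᵏ` for all `k ≥ 1`,
and the right side decays faster than any geometric sequence.

For such a triangular `a`, `aⁿ + p = [[(e a e)ⁿ, *], [0, 1 + (p a)ⁿ]]`, and `1 + (p a)ⁿ` is
invertible, so `aⁿ + p` is invertible iff `e a e` is invertible in its corner. Finally, if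
`a = [[A, B], [0, Q]]` with `A` invertible and `Q` quasinilpotent, then `[[A⁻¹, S], [0, 0]]` with
`S = ∑ A⁻ᵏ⁻² B Qᵏ` is a g-Drazin inverse of `a`; the series converges because `Q` is quasinilpotent.
-/

open Topology

section SuperGeometric

variable {E : Type*} [SeminormedAddCommGroup E] {f g : ℕ → E}

def SuperGeometric (f : ℕ → E) : Prop :=
  ∀ ε : ℝ, 0 < ε → ∀ᶠ k in atTop, ‖f k‖ ≤ ε ^ k

theorem superGeometric_iff_tendsto :
    SuperGeometric f ↔ Tendsto (fun k : ℕ => ‖f k‖ ^ (1 / (k : ℝ))) atTop (𝓝 0) := by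
  have key : ∀ {ε : ℝ} {k : ℕ}, 0 < ε → k ≠ 0 →
      (‖f k‖ ^ (1 / (k : ℝ)) ≤ ε ↔ ‖f k‖ ≤ ε ^ k) := fun hε hk => by
    rw [one_div, Real.rpow_inv_le_iff_of_pos (norm_nonneg _) hε.le (by positivity),
      Real.rpow_natCast]
  rw [tendsto_order]
  refine ⟨fun h => ⟨fun b hb => .of_forall fun k => hb.trans_le (by positivity), fun ε hε => ?_⟩,
    fun h ε hε => ?_⟩
  · filter_upwards [h (ε / 2) (half_pos hε), eventually_ne_atTop 0] with k hk hk0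
    exact ((key (half_pos hε) hk0).2 hk).trans_lt (half_lt_self hε)
  · filter_upwards [h.2 ε hε, eventually_ne_atTop 0] with k hk hk0
    exact (key hε hk0).1 hk.le

theorem SuperGeometric.of_norm_succ_le (hf : SuperGeometric f) {C : ℝ}
    (h : ∀ k, ‖g (k + 1)‖ ≤ C * ‖f k‖) : SuperGeometric g := by
  intro ε hε
  have hsmall : ∀ᶠ k in atTop, |C| * (1 / 2 : ℝ) ^ k ≤ ε :=
    ((tendsto_pow_atTop_nhds_zero_of_lt_one (by norm_num) (by norm_num)).const_mul |C|
      |>.eventually_le_const (by simpa using hε))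
  obtain ⟨N, hN⟩ := eventually_atTop.1 ((hf (ε / 2) (half_pos hε)).and hsmall)
  refine eventually_atTop.2 ⟨N + 1, fun j hj => ?_⟩
  obtain ⟨k, rfl⟩ : ∃ k, j = k + 1 := ⟨j - 1, by omega⟩
  obtain ⟨hfk, hCk⟩ := hN k (by omega)
  calc ‖g (k + 1)‖ ≤ |C| * ‖f k‖ := (h k).trans (by gcongr; exact le_abs_self C)
    _ ≤ |C| * (ε / 2) ^ k := by gcongr
    _ = |C| * (1 / 2) ^ k * ε ^ k := by rw [div_eq_mul_one_div ε, mul_pow]; ring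
    _ ≤ ε * ε ^ k := by gcongr
    _ = ε ^ (k + 1) := (pow_succ' ε k).symm

theorem SuperGeometric.summable_geometric_mul (hf : SuperGeometric f) (B : ℝ) :
    Summable fun k => B ^ k * ‖f k‖ := by
  set δ : ℝ := (2 * (|B| + 1))⁻¹
  have hδ : |B| * δ ≤ 1 / 2 := by
    rw [one_div, ← div_eq_mul_inv, div_le_iff₀ (by positivity)]
    linarith
  refine Summable.of_norm_bounded_eventually_nat
    (summable_geometric_of_lt_one (by norm_num) (by norm_num : (1 / 2 : ℝ) < 1)) ?_
  filter_upwards [hf δ (by positivity)] with k hk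
  calc ‖B ^ k * ‖f k‖‖ = |B| ^ k * ‖f k‖ := by
        rw [Real.norm_eq_abs, abs_mul, abs_pow, abs_norm]
    _ ≤ |B| ^ k * δ ^ k := by gcongr
    _ ≤ (1 / 2) ^ k := by rw [← mul_pow]; gcongr

end SuperGeometric

section Quasinilpotent

variable {R : Type*} [NormedRing R] {q y : R}

theorem isQuasinilpotent_iff_superGeometric :
    IsQuasinilpotent y ↔ SuperGeometric (y ^ ·) :=
  superGeometric_iff_tendsto.symm

theorem isUnit_one_add_of_norm_pow_lt_one [HasSummableGeomSeries R] {m : ℕ}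
    (h : ‖y ^ m‖ < 1) : IsUnit (1 + y) := by
  have hprod : (1 - -y) * ∑ i ∈ Finset.range m, (-y) ^ i = 1 - (-y) ^ m := mul_neg_geom_sum _ _
  have hunit : IsUnit (1 - (-y) ^ m) := by
    refine isUnit_one_sub_of_norm_lt_one ?_
    rcases neg_one_pow_eq_or R m with hm | hm <;> simpa [neg_pow, hm] using h
  rw [← hprod, Commute.isUnit_mul_iff (hprod.trans (geom_sum_mul_neg _ _).symm)] at hunit
  simpa using hunit.1

theorem IsQuasinilpotent.isUnit_one_add_pow [HasSummableGeomSeries R]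
    (hy : IsQuasinilpotent y) {n : ℕ} (hn : n ≠ 0) : IsUnit (1 + y ^ n) := by
  obtain ⟨N, hN⟩ :=
    eventually_atTop.1 (isQuasinilpotent_iff_superGeometric.1 hy (1 / 2) one_half_pos)
  refine isUnit_one_add_of_norm_pow_lt_one (m := N + 1) ?_
  rw [← pow_mul]
  calc ‖y ^ (n * (N + 1))‖ ≤ (1 / 2) ^ (n * (N + 1)) := hN _ (by nlinarith [Nat.pos_of_ne_zero hn])
    _ < 1 := pow_lt_one₀ (by norm_num) (by norm_num) (by positivity)

theorem IsQuasinilpotent.mul_left_of_mul_eq (hq : IsQuasinilpotent q) {c : R} (h : q * c = q) :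
    IsQuasinilpotent (c * q) := by
  have hpow : ∀ k, (c * q) ^ (k + 1) = c * q ^ (k + 1) := by
    intro k
    induction k with
    | zero => simp
    | succ k ih =>
      rw [pow_succ, ih, ← mul_assoc, mul_assoc c, pow_succ q k, mul_assoc (q ^ k), h, ← pow_succ,
        mul_assoc, ← pow_succ]
  refine isQuasinilpotent_iff_superGeometric.2 ?_
  exact (isQuasinilpotent_iff_superGeometric.1 hq).of_norm_succ_le fun k => by
    rw [hpow, pow_succ', ← mul_assoc]; exact norm_mul_le _ _

theorem IsQuasinilpotent.exists_eq_add_mul_mul [CompleteSpace R] (hq : IsQuasinilpotent q)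
    (u b : R) : ∃ t, t = b + u * t * q := by
  set term : ℕ → R := fun k => u ^ k * b * q ^ k
  have hstep : ∀ k, term (k + 1) = u * term k * q := fun k => by
    simp only [term, pow_succ' u, pow_succ q, mul_assoc]
  have hsum : Summable term := by
    refine (summable_nat_add_iff 1).1 (Summable.of_norm_bounded
      (((isQuasinilpotent_iff_superGeometric.1 hq).summable_geometric_mul ‖u‖).mul_left
        (‖u‖ * ‖b‖ * ‖q‖)) fun k => ?_)
    calc ‖u ^ (k + 1) * b * q ^ (k + 1)‖ ≤ ‖u ^ (k + 1)‖ * ‖b‖ * ‖q * q ^ k‖ := by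
          rw [pow_succ' q]; exact norm_mul₃_le
      _ ≤ ‖u‖ ^ (k + 1) * ‖b‖ * (‖q‖ * ‖q ^ k‖) := by
          gcongr
          · exact norm_pow_le' u k.succ_pos
          · exact norm_mul_le _ _
      _ = ‖u‖ * ‖b‖ * ‖q‖ * (‖u‖ ^ k * ‖q ^ k‖) := by ring
  refine ⟨∑' k, term k, ?_⟩
  calc ∑' k, term k = term 0 + ∑' k, u * term k * q := by
        rw [hsum.tsum_eq_zero_add]; simp only [hstep]
    _ = b + u * (∑' k, term k) * q := by
        rw [(hsum.mul_left u).tsum_mul_right, hsum.tsum_mul_left]; simp [term]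

end Quasinilpotent

section Corner

variable {R : Type*} [Ring R] {p a : R}

theorem mul_pow_succ_of_mul_eq (h : p * a = p * a * p) (k : ℕ) :
    (p * a) ^ (k + 1) = p * a ^ (k + 1) := by
  induction k with
  | zero => simp
  | succ k ih => rw [pow_succ', ih, ← mul_assoc, ← h, mul_assoc, ← pow_succ']

theorem mul_pow_mul_of_mul_eq (hp : IsIdempotentElem p) (h : p * a = p * a * p) (n : ℕ) :
    p * a ^ n * p = p * a ^ n := by
  cases n with
  | zero => simpa using hp.eq
  | succ k => rw [← mul_pow_succ_of_mul_eq h, pow_succ, mul_assoc, ← h]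

theorem mul_mul_one_sub_of_mul_eq (h : p * a = p * a * p) : p * a * (1 - p) = 0 := by
  rw [mul_one_sub, ← h, sub_self]

theorem mul_one_sub_of_mul_eq (h : p * a = p * a * p) : a * (1 - p) = (1 - p) * a * (1 - p) := by
  calc a * (1 - p) = a * (1 - p) - p * a * (1 - p) := by rw [mul_mul_one_sub_of_mul_eq h, sub_zero]
    _ = (1 - p) * a * (1 - p) := by noncomm_ring

theorem one_sub_mul_one_sub_add_pow (hp : IsIdempotentElem p) (h : p * a = p * a * p) (n : ℕ) :
    ((1 - p) * a * (1 - p) + p) ^ n = (1 - p) * a ^ n * (1 - p) + p := by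
  induction n with
  | zero => rw [pow_zero, pow_zero, mul_one, hp.one_sub.eq, sub_add_cancel]
  | succ n ih =>
    rw [pow_succ, ih]
    calc ((1 - p) * a ^ n * (1 - p) + p) * ((1 - p) * a * (1 - p) + p)
        = (1 - p) * a ^ n * ((1 - p) * (1 - p) * a * (1 - p)) + (1 - p) * a ^ n * ((1 - p) * p)
          + p * (1 - p) * a * (1 - p) + p * p := by noncomm_ring
      _ = (1 - p) * a ^ (n + 1) * (1 - p) + p := by
        rw [hp.one_sub.eq, ← mul_one_sub_of_mul_eq h, hp.one_sub_mul_self, hp.mul_one_sub_self,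
          hp.eq, pow_succ]
        noncomm_ring

theorem isUnit_iff_of_mul_eq (hp : IsIdempotentElem p) {m : R} (hm : p * m = p * m * p)
    (hd : IsUnit (p * m * p + (1 - p))) : IsUnit m ↔ IsUnit ((1 - p) * m * (1 - p) + p) := by
  have hpe : p * (1 - p) = 0 := hp.mul_one_sub_self
  have hep : (1 - p) * p = 0 := hp.one_sub_mul_self
  have hee : (1 - p) * (1 - p) = 1 - p := hp.one_sub.eq
  have hnil : IsUnit (1 + (1 - p) * m * p) := IsNilpotent.isUnit_one_add ⟨2, by
    rw [sq, show (1 - p) * m * p * ((1 - p) * m * p) = (1 - p) * m * (p * (1 - p)) * m * p by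
      noncomm_ring, hpe]; simp⟩
  -- the block factorization [[A, B], [0, D]] = diag(1, D) (1 + B) diag(A, 1)
  have hfac : (p * m * p + (1 - p)) * (1 + (1 - p) * m * p) * ((1 - p) * m * (1 - p) + p) = m := by
    have hleft : (p * m * p + (1 - p)) * (1 + (1 - p) * m * p) =
        p * m * p + (1 - p) * m * p + (1 - p) := by
      calc _ = p * m * p + (1 - p) * (1 - p) * m * p + (1 - p) + p * m * (p * (1 - p)) * m * p := by
            noncomm_ring
        _ = _ := by rw [hpe, hee]; noncomm_ring
    calc _ = p * m * (p * p) + (1 - p) * m * (p * p) + (1 - p) * (1 - p) * m * (1 - p) + (1 - p) * p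
          + (p * m * (p * (1 - p)) + (1 - p) * m * (p * (1 - p))) * m * (1 - p) := by
          rw [hleft]; noncomm_ring
      _ = m - p * m * (1 - p) := by rw [hpe, hp.eq, hee, hep]; noncomm_ring
      _ = m := by rw [mul_mul_one_sub_of_mul_eq hm, sub_zero]
  obtain ⟨u, hu⟩ := hd.mul hnil
  rw [← hu] at hfac
  conv_lhs => rw [← hfac]
  exact Units.isUnit_units_mul _ _

end Corner

theorem isUnit_pow_add_iff {R : Type*} [NormedRing R] [HasSummableGeomSeries R] {p a : R}
    (hp : IsIdempotentElem p) (h : p * a = p * a * p) (hq : IsQuasinilpotent (p * a)) {n : ℕ}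
    (hn : n ≠ 0) : IsUnit (a ^ n + p) ↔ IsUnit ((1 - p) * a * (1 - p) + p) := by
  have hpow := mul_pow_mul_of_mul_eq hp h n
  have hcorner : (1 - p) * (a ^ n + p) * (1 - p) + p = ((1 - p) * a * (1 - p) + p) ^ n := by
    rw [one_sub_mul_one_sub_add_pow hp h, mul_add, add_mul, mul_assoc (1 - p) p,
      hp.mul_one_sub_self, mul_zero, add_zero]
  rw [isUnit_iff_of_mul_eq hp, hcorner, isUnit_pow_iff hn]
  · rw [mul_add, add_mul, hpow, hp.eq, hp.eq]
  · obtain ⟨k, rfl⟩ := Nat.exists_eq_succ_of_ne_zero hn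
    rw [mul_add, add_mul, hpow, hp.eq, hp.eq, add_assoc, add_sub_cancel, add_comm,
      ← mul_pow_succ_of_mul_eq h]
    exact hq.isUnit_one_add_pow hn

/-- `y` inverts `e a e` in the corner ring `e R e`, for `a` with `a e = e a e`. -/
structure IsCornerInv {R : Type*} [Ring R] (e a y : R) : Prop where
  proj_mul : e * y = y
  mul_proj : y * e = y
  mul_inv : a * y = e
  inv_mul_proj : y * a * e = e

section CornerInv

variable {R : Type*} [Ring R] {p a y : R}

theorem IsCornerInv.compl_mul_eq_zero (hp : IsIdempotentElem p) (hy : IsCornerInv (1 - p) a y) :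
    p * y = 0 := by
  rw [← hy.proj_mul, ← mul_assoc, hp.mul_one_sub_self, zero_mul]

theorem IsCornerInv.mul_compl_eq_zero (hp : IsIdempotentElem p) (hy : IsCornerInv (1 - p) a y) :
    y * p = 0 := by
  rw [← hy.mul_proj, mul_assoc, hp.one_sub_mul_self, mul_zero]

theorem isUnit_one_sub_mul_one_sub_add_iff (hp : IsIdempotentElem p) (h : p * a = p * a * p) :
    IsUnit ((1 - p) * a * (1 - p) + p) ↔ ∃ y, IsCornerInv (1 - p) a y := by
  have hcorner := mul_one_sub_of_mul_eq h
  constructor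
  · rintro ⟨u, hu⟩
    have hm : (1 - p) * a * (1 - p) = u - p := by rw [hu, add_sub_cancel_right]
    have hup : ↑u * p = p := by
      rw [hu, add_mul, mul_assoc _ (1 - p) p, hp.one_sub_mul_self, mul_zero, zero_add, hp.eq]
    have hpu : p * ↑u = p := by
      rw [hu, mul_add, ← mul_assoc, ← mul_assoc, hp.mul_one_sub_self, zero_mul, zero_mul,
        zero_add, hp.eq]
    set y : R := ↑u⁻¹ - p with hy
    have hpy : p * y = 0 := by rw [mul_sub, u.mul_inv_eq_iff_eq_mul.2 hpu.symm, hp.eq, sub_self]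
    have hyp : y * p = 0 := by rw [sub_mul, u.inv_mul_eq_iff_eq_mul.2 hup.symm, hp.eq, sub_self]
    have hy1 : (1 - p) * y = y := by rw [sub_mul, one_mul, hpy, sub_zero]
    refine ⟨y, hy1, by rw [mul_sub, mul_one, hyp, sub_zero], ?_, ?_⟩
    · rw [← hy1, ← mul_assoc, hcorner, hm, sub_mul, hpy, sub_zero, hy, mul_sub, u.mul_inv, hup]
    · rw [mul_assoc, hcorner, hm, mul_sub, hyp, sub_zero, hy, sub_mul, u.inv_mul, hpu]
  · rintro ⟨y, hy⟩
    refine isUnit_iff_exists.2 ⟨y + p, ?_, ?_⟩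
    · rw [mul_add, add_mul, add_mul, ← hcorner, mul_assoc a, hy.proj_mul, hy.mul_inv,
        mul_assoc _ (1 - p), hp.one_sub_mul_self, mul_zero, hy.compl_mul_eq_zero hp, hp.eq]
      abel
    · have hpm : p * ((1 - p) * a * (1 - p)) = 0 := by
        simp only [← mul_assoc, hp.mul_one_sub_self, zero_mul]
      rw [mul_add, add_mul, add_mul, ← mul_assoc, ← mul_assoc, hy.mul_proj, hy.inv_mul_proj,
        hy.mul_compl_eq_zero hp, hpm, hp.eq]
      abel

end CornerInv

section CoreEP

variable {R : Type*} [NormedRing R] {p a x y : R}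

theorem IsCornerInv.isCoreEPInv [StarRing R] (hy : IsCornerInv (1 - p) a y) (hps : star p = p)
    (h : p * a = p * a * p) (hq : IsQuasinilpotent (p * a)) : IsCoreEPInv a y := by
  have hrange : (1 - y * a) * p = 1 - y * a := by
    have : (1 - y * a) * (1 - p) = 0 := by rw [sub_mul, one_mul, hy.inv_mul_proj, sub_self]
    rw [mul_one_sub, sub_eq_zero] at this
    exact this.symm
  refine ⟨by rw [sq, ← mul_assoc, hy.mul_inv, hy.proj_mul],
    by rw [hy.mul_inv, star_sub, star_one, hps], superGeometric_iff_tendsto.1 ?_⟩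
  have hterm : ∀ k, a ^ (k + 1) - y * a ^ (k + 1 + 1) = (1 - y * a) * (p * a) * (p * a) ^ k :=
    fun k => by
      rw [mul_assoc (1 - y * a), ← pow_succ', mul_pow_succ_of_mul_eq h, ← mul_assoc, hrange,
        sub_mul, one_mul, mul_assoc, ← pow_succ']
  exact (isQuasinilpotent_iff_superGeometric.1 hq).of_norm_succ_le fun k => by
    rw [hterm]; exact norm_mul_le _ _

end CoreEP

section GDrazin

variable {R : Type*} [NormedRing R] [CompleteSpace R] {p a y : R}

theorem IsCornerInv.exists_isGDrazinInv (hp : IsIdempotentElem p) (hy : IsCornerInv (1 - p) a y)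
    (h : p * a = p * a * p) (hq : IsQuasinilpotent (p * a)) : ∃ d, IsGDrazinInv a d := by
  generalize hq_def : p * a = q at h hq
  -- `t` solves the Sylvester equation `t - y t q = y a p`; the off-diagonal block of `d` is `y t`
  obtain ⟨t, ht⟩ := hq.exists_eq_add_mul_mul y (y * a * p)
  have hpy : p * y = 0 := hy.compl_mul_eq_zero hp
  have hqy : q * y = 0 := by rw [← hq_def, mul_assoc, hy.mul_inv, hp.mul_one_sub_self]
  have het : (1 - p) * t = t := by
    conv_lhs => rw [ht]
    simp only [mul_add, ← mul_assoc, hy.proj_mul]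
    exact ht.symm
  have htp : t * p = t := by
    conv_lhs => rw [ht]
    rw [add_mul, mul_assoc (y * a), hp.eq, mul_assoc (y * t), ← h, ← ht]
  have has : a * (y * t) = y * a * p + y * t * q := by rw [← mul_assoc, hy.mul_inv, het, ← ht]
  have hya : y * a = (1 - p) + y * a * p := by
    calc y * a = y * a * (1 - p) + y * a * p := by noncomm_ring
      _ = _ := by rw [hy.inv_mul_proj]
  have had : a * (y + y * t) = (1 - p) + (y * a * p + y * t * q) := by
    rw [mul_add, hy.mul_inv, has]
  have hsa : y * t * a = y * t * q := by rw [← hq_def, ← mul_assoc, mul_assoc y t p, htp]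
  have hda : (y + y * t) * a = (1 - p) + (y * a * p + y * t * q) := by
    rw [add_mul, hsa]
    nth_rewrite 1 [hya]
    rw [add_assoc]
  refine ⟨y + y * t, had.trans hda.symm, ?_, ?_⟩
  · rw [hda]
    calc _ = (1 - p) * y + (1 - p) * y * t + y * a * (p * y) * (1 + t)
          + y * t * (q * y) * (1 + t) := by noncomm_ring
      _ = y + y * t := by rw [hy.proj_mul, hpy, hqy]; simp
  · have hW : a - a ^ 2 * (y + y * t) = (1 - (y * a * p + y * t * q)) * q := by
      calc a - a ^ 2 * (y + y * t) = a * p - a * y * a * p - a * (y * t) * q := by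
            rw [sq, mul_assoc, had]; noncomm_ring
        _ = p * a * p - (y * a * p + y * t * q) * q := by rw [hy.mul_inv, has]; noncomm_ring
        _ = _ := by rw [hq_def, ← h]; noncomm_ring
    rw [hW]
    refine hq.mul_left_of_mul_eq ?_
    simp only [mul_sub, mul_add, mul_one, ← mul_assoc, hqy, zero_mul, add_zero, sub_zero]

end GDrazin

theorem pow_succ_mul_pow_succ_of_mul_sq_eq {M : Type*} [Monoid M] {a x : M} (h : a * x ^ 2 = x)
    (k : ℕ) : a ^ (k + 1) * x ^ (k + 1) = a * x := by
  induction k with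
  | zero => simp
  | succ k ih =>
    rw [pow_succ a (k + 1), mul_assoc, pow_succ' x (k + 1), pow_succ' x k, ← mul_assoc x x,
      ← mul_assoc a, ← sq, h, ← pow_succ', ih]

namespace IsCoreEPInv

variable {R : Type*} [NormedRing R] [StarRing R] {a x : R}

theorem inv_mul_proj (h : IsCoreEPInv a x) : x * a * (a * x) = a * x := by
  have hf := superGeometric_iff_tendsto.2 h.2.2
  have hbound : ∀ k, ‖a * x - x * a * (a * x)‖ ≤
      ‖x‖ ^ (k + 1) * ‖a ^ (k + 1) - x * a ^ (k + 1 + 1)‖ := fun k => by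
    have hfac : (a ^ (k + 1) - x * a ^ (k + 1 + 1)) * x ^ (k + 1) = a * x - x * a * (a * x) := by
      rw [sub_mul, pow_succ' a (k + 1), mul_assoc x, mul_assoc a,
        pow_succ_mul_pow_succ_of_mul_sq_eq h.1, ← mul_assoc]
    rw [← hfac, mul_comm (‖x‖ ^ _)]
    exact (norm_mul_le _ _).trans (by gcongr; exact norm_pow_le' x k.succ_pos)
  have hlim := (tendsto_add_atTop_iff_nat 1).2 (hf.summable_geometric_mul ‖x‖).tendsto_atTop_zero
  have := norm_le_zero_iff.1 (ge_of_tendsto' hlim hbound)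
  exact (sub_eq_zero.1 this).symm

theorem isCornerInv (h : IsCoreEPInv a x) : IsCornerInv (a * x) a x := by
  have hx : a * x * x = x := by rw [mul_assoc, ← sq, h.1]
  refine ⟨hx, ?_, rfl, h.inv_mul_proj⟩
  calc x * (a * x) = x * a * (a * x * x) := by rw [hx, mul_assoc]
    _ = x * a * (a * x) * x := by simp only [mul_assoc]
    _ = x := by rw [h.inv_mul_proj, hx]

theorem isIdempotentElem (h : IsCoreEPInv a x) : IsIdempotentElem (a * x) := by
  rw [IsIdempotentElem, mul_assoc, h.isCornerInv.mul_proj]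

theorem one_sub_mul_eq (h : IsCoreEPInv a x) :
    (1 - a * x) * a = (1 - a * x) * a * (1 - a * x) := by
  have hkey : x * (a * (a * x)) = a * x := by rw [← mul_assoc]; exact h.inv_mul_proj
  have : (1 - a * x) * a * (a * x) = 0 := by simp only [sub_mul, one_mul, mul_assoc, hkey, sub_self]
  rw [mul_one_sub, this, sub_zero]

theorem isQuasinilpotent_one_sub_mul (h : IsCoreEPInv a x) :
    IsQuasinilpotent ((1 - a * x) * a) := by
  refine isQuasinilpotent_iff_superGeometric.2 <|
    (superGeometric_iff_tendsto.2 h.2.2).of_norm_succ_le (C := ‖a‖) fun k =>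
      le_of_eq_of_le ?_ (norm_mul_le _ _)
  rw [mul_pow_succ_of_mul_eq h.one_sub_mul_eq, mul_sub, ← mul_assoc, sub_mul, one_mul, ← pow_succ']

end IsCoreEPInv

variable {A : Type*} [NormedRing A] [NormedAlgebra ℂ A] [StarRing A] [StarModule ℂ A]
  [CompleteSpace A]

/-- Corollary 3.7. -/
theorem isCoreEPInv_exists_iff_polar (a : A) (n : ℕ) (hn : 0 < n) :
    (∃ x, IsCoreEPInv a x) ↔
      (∃ x, IsGDrazinInv a x) ∧
      ∃ p : A, p ^ 2 = p ∧ star p = p ∧ p * a = p * a * p ∧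
        IsQuasinilpotent (p * a) ∧ IsUnit (a ^ n + p) := by
  constructor
  · rintro ⟨x, hx⟩
    have hp := hx.isIdempotentElem.one_sub
    have hpa := hx.one_sub_mul_eq
    have hq := hx.isQuasinilpotent_one_sub_mul
    have hy : IsCornerInv (1 - (1 - a * x)) a x := by rw [sub_sub_cancel]; exact hx.isCornerInv
    refine ⟨hy.exists_isGDrazinInv hp hpa hq, 1 - a * x, hp.pow_succ_eq 1, ?_, hpa, hq,
      (isUnit_pow_add_iff hp hpa hq hn.ne').2
        ((isUnit_one_sub_mul_one_sub_add_iff hp hpa).2 ⟨x, hy⟩)⟩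
    rw [star_sub, star_one, hx.2.1]
  · rintro ⟨-, p, hp2, hps, hpa, hq, hu⟩
    have hp : IsIdempotentElem p := by rwa [IsIdempotentElem, ← sq]
    obtain ⟨y, hy⟩ := (isUnit_one_sub_mul_one_sub_add_iff hp hpa).1
      ((isUnit_pow_add_iff hp hpa hq hn.ne').1 hu)
    exact ⟨y, hy.isCoreEPInv hps hpa hq⟩
end
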